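/- arXiv:1210.2068 — 2 statements merged into one kernel-verified Lean document; each statement's English description precedes it below -/
import Mathlib

section
/- Let F be a Finsler structure on U and g̃ a Riemannian metric on U. Then on U × (ℝⁿ∖{0}) the spray coefficients of F decompose as 2G^i = 2G̃^i + 2B^i, where G̃^i(x,y) := (1/2) γ̃^i_{jk}(x) y^j y^k and 2B^i := (1/2) g^{ih}( 2 y_{h||j} y^j − (F²)_{||h} ). -/
noncomputable section

open scoped BigOperators

/-- Partial derivative of a function on `Fin k → ℝ` in the `i`-th coordinate direction. -/
def pd {k : ℕ} {E : Type*} [NormedAddCommGroup E] [NormedSpace ℝ E]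
    (f : (Fin k → ℝ) → E) (i : Fin k) (x : Fin k → ℝ) : E :=
  fderiv ℝ f x (Pi.single i 1)

/-- The fundamental tensor `g_{ij}(x,y) = (1/2) ∂²(F²)/∂y^i∂y^j` of a Finsler function. -/
def gF {n : ℕ} (F : (Fin n → ℝ) → (Fin n → ℝ) → ℝ) (i j : Fin n)
    (x y : Fin n → ℝ) : ℝ :=
  (1 / 2) * pd (fun y' => pd (fun y'' => (F x y'') ^ 2) j y') i y

/-- The fundamental tensor as a matrix. -/
def gMat {n : ℕ} (F : (Fin n → ℝ) → (Fin n → ℝ) → ℝ) (x y : Fin n → ℝ) :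
    Matrix (Fin n) (Fin n) ℝ :=
  Matrix.of fun i j => gF F i j x y

/-- The inverse fundamental tensor `g^{ij}`. -/
def gInv {n : ℕ} (F : (Fin n → ℝ) → (Fin n → ℝ) → ℝ) (i j : Fin n)
    (x y : Fin n → ℝ) : ℝ :=
  (gMat F x y)⁻¹ i j

/-- `y_h := (1/2) ∂(F²)/∂y^h`. -/
def yLow {n : ℕ} (F : (Fin n → ℝ) → (Fin n → ℝ) → ℝ) (h : Fin n)
    (x y : Fin n → ℝ) : ℝ :=
  (1 / 2) * pd (fun y' => (F x y') ^ 2) h y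

/-- A Finsler structure on an open set `U ⊆ ℝⁿ`, in coordinates. -/
structure IsFinsler {n : ℕ} (U : Set (Fin n → ℝ))
    (F : (Fin n → ℝ) → (Fin n → ℝ) → ℝ) : Prop where
  isOpen : IsOpen U
  cont : ContinuousOn (fun p : (Fin n → ℝ) × (Fin n → ℝ) => F p.1 p.2) (U ×ˢ Set.univ)
  smooth : ContDiffOn ℝ (⊤ : ℕ∞) (fun p : (Fin n → ℝ) × (Fin n → ℝ) => F p.1 p.2)
    (U ×ˢ {y | y ≠ 0})
  homog : ∀ x ∈ U, ∀ y : Fin n → ℝ, ∀ l : ℝ, 0 < l → F x (l • y) = l * F x y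
  posdef : ∀ x ∈ U, ∀ y : Fin n → ℝ, y ≠ 0 → (gMat F x y).PosDef

/-- The spray coefficients `G^i` of a Finsler structure:
`2G^i = (1/2) g^{ih}( ∂²(F²)/∂y^h∂x^k · y^k − ∂(F²)/∂x^h )`. -/
def spray {n : ℕ} (F : (Fin n → ℝ) → (Fin n → ℝ) → ℝ) (i : Fin n)
    (x y : Fin n → ℝ) : ℝ :=
  (1 / 4) * ∑ h, gInv F i h x y *
    ((∑ k, pd (fun x' => pd (fun y' => (F x' y') ^ 2) h y) k x * y k)
      - pd (fun x' => (F x' y) ^ 2) h x)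

/-- The Cartan nonlinear connection `G^i_j := ∂G^i/∂y^j`. -/
def nCart {n : ℕ} (F : (Fin n → ℝ) → (Fin n → ℝ) → ℝ) (i j : Fin n)
    (x y : Fin n → ℝ) : ℝ :=
  pd (fun y' => spray F i x y') j y

/-- The adapted (horizontal) derivation `δ_i := ∂/∂x^i − G^j_i ∂/∂y^j` acting on
functions of `(x,y)`. -/
def hder {n : ℕ} (F : (Fin n → ℝ) → (Fin n → ℝ) → ℝ) (i : Fin n)
    (f : (Fin n → ℝ) → (Fin n → ℝ) → ℝ) (x y : Fin n → ℝ) : ℝ :=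
  pd (fun x' => f x' y) i x - ∑ j, nCart F j i x y * pd (fun y' => f x y') j y

/-- The Chern–Rund connection coefficients
`Γ^i_{jk} := (1/2) g^{ih}( δ_k g_{hj} + δ_j g_{hk} − δ_h g_{jk} )`. -/
def chern {n : ℕ} (F : (Fin n → ℝ) → (Fin n → ℝ) → ℝ) (i j k : Fin n)
    (x y : Fin n → ℝ) : ℝ :=
  (1 / 2) * ∑ h, gInv F i h x y *
    (hder F k (gF F h j) x y + hder F j (gF F h k) x y - hder F h (gF F j k) x y)

/-- `G^i_{jk} := ∂²G^i/∂y^j∂y^k`. -/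
def sprayH {n : ℕ} (F : (Fin n → ℝ) → (Fin n → ℝ) → ℝ) (i j k : Fin n)
    (x y : Fin n → ℝ) : ℝ :=
  pd (fun y' => pd (fun y'' => spray F i x y'') k y') j y

/-- The torsion trace `P_i := P^j_{ij} = G^j_{ij} − Γ^j_{ij}`. -/
def pOne {n : ℕ} (F : (Fin n → ℝ) → (Fin n → ℝ) → ℝ) (i : Fin n)
    (x y : Fin n → ℝ) : ℝ :=
  ∑ j, (sprayH F j i j x y - chern F j i j x y)
/-- A Riemannian metric on an open set of `ℝ^m`, in coordinates. -/
structure IsRiemann {m : ℕ} (Ut : Set (Fin m → ℝ))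
    (gt : (Fin m → ℝ) → Matrix (Fin m) (Fin m) ℝ) : Prop where
  isOpen : IsOpen Ut
  smooth : ∀ i j, ContDiffOn ℝ (⊤ : ℕ∞) (fun x => gt x i j) Ut
  symm : ∀ x ∈ Ut, (gt x).IsSymm
  posdef : ∀ x ∈ Ut, (gt x).PosDef

/-- The Christoffel symbols `γ̃^i_{jk}` of a Riemannian metric in coordinates. -/
def christ {m : ℕ} (gt : (Fin m → ℝ) → Matrix (Fin m) (Fin m) ℝ)
    (i j k : Fin m) (x : Fin m → ℝ) : ℝ :=
  (1 / 2) * ∑ h, (gt x)⁻¹ i h *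
    (pd (fun x' => gt x' h j) k x + pd (fun x' => gt x' h k) j x
      - pd (fun x' => gt x' j k) h x)
/-- The horizontal derivation `δ̃_j := ∂/∂x^j − γ̃^k_{jl} y^l ∂/∂y^k` of a Riemannian
metric, acting on functions of `(x,y)`; `f_{||j} := δ̃_j f`. -/
def rhder {n : ℕ} (gt : (Fin n → ℝ) → Matrix (Fin n) (Fin n) ℝ) (j : Fin n)
    (f : (Fin n → ℝ) → (Fin n → ℝ) → ℝ) (x y : Fin n → ℝ) : ℝ :=
  pd (fun x' => f x' y) j x
    - ∑ k, (∑ l, christ gt k j l x * y l) * pd (fun y' => f x y') k y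
/-- `y_{h||j} := δ̃_j y_h − γ̃^l_{hj} y_l`. -/
def yLowCov {n : ℕ} (F : (Fin n → ℝ) → (Fin n → ℝ) → ℝ)
    (gt : (Fin n → ℝ) → Matrix (Fin n) (Fin n) ℝ) (h j : Fin n)
    (x y : Fin n → ℝ) : ℝ :=
  rhder gt j (yLow F h) x y - ∑ l, christ gt l h j x * yLow F l x y

/-- `G̃^i(x,y) := (1/2) γ̃^i_{jk}(x) y^j y^k`. -/
def gTildeSpray {n : ℕ} (gt : (Fin n → ℝ) → Matrix (Fin n) (Fin n) ℝ) (i : Fin n)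
    (x y : Fin n → ℝ) : ℝ :=
  (1 / 2) * ∑ j, ∑ k, christ gt i j k x * y j * y k

/-- `B^i`, defined by `2B^i := (1/2) g^{ih}( 2 y_{h||j} y^j − (F²)_{||h} )`. -/
def bCoef {n : ℕ} (F : (Fin n → ℝ) → (Fin n → ℝ) → ℝ)
    (gt : (Fin n → ℝ) → Matrix (Fin n) (Fin n) ℝ) (i : Fin n)
    (x y : Fin n → ℝ) : ℝ :=
  (1 / 4) * ∑ h, gInv F i h x y *
    (2 * (∑ j, yLowCov F gt h j x y * y j)
      - rhder gt h (fun a b => (F a b) ^ 2) x y)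


/-- Pulling a constant multiple out of a partial derivative (unconditional). -/
lemma pd_const_mul {k : ℕ} (c : ℝ) (f : (Fin k → ℝ) → ℝ) (i : Fin k) (x : Fin k → ℝ) :
    pd (fun z => c * f z) i x = c * pd f i x := by
  unfold pd
  by_cases hc : c = 0
  · subst hc; simp
  by_cases hf : DifferentiableAt ℝ f x
  · rw [fderiv_const_mul hf]; simp
  · have hf2 : ¬ DifferentiableAt ℝ (fun z => c * f z) x := by
      intro h
      have h2 := h.const_mul c⁻¹
      have he : (fun z => c⁻¹ * (c * f z)) = f := by
        funext z; field_simp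
      rw [he] at h2
      exact hf h2
    rw [fderiv_zero_of_not_differentiableAt hf, fderiv_zero_of_not_differentiableAt hf2]
    simp

lemma key_algebra {n : ℕ} (h : Fin n) (C : Fin n → Fin n → Fin n → ℝ)
    (P gfh yl yv : Fin n → ℝ) (Q : ℝ) :
    2 * (∑ j, ((1/2) * P j - (∑ k, (∑ l, C k j l * yv l) * gfh k)
          - (∑ l, C l h j * yl l)) * yv j)
      - (Q - ∑ k, (∑ l, C k h l * yv l) * (2 * yl k))
    = ((∑ k, P k * yv k) - Q)
      - 2 * ∑ j, (∑ k, (∑ l, C k j l * yv l) * gfh k) * yv j := by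
  have swap : (∑ j, (∑ l, C l h j * yl l) * yv j)
      = ∑ k, (∑ l, C k h l * yv l) * yl k := by
    simp only [Finset.sum_mul]
    rw [Finset.sum_comm]
    exact Finset.sum_congr rfl fun a _ => Finset.sum_congr rfl fun b _ => by ring
  have s4 : (∑ k, (∑ l, C k h l * yv l) * (2 * yl k))
      = 2 * ∑ k, (∑ l, C k h l * yv l) * yl k := by
    rw [Finset.mul_sum]
    exact Finset.sum_congr rfl fun k _ => by ring
  have expand : (∑ j, ((1/2) * P j - (∑ k, (∑ l, C k j l * yv l) * gfh k)
          - (∑ l, C l h j * yl l)) * yv j)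
      = (1/2) * (∑ k, P k * yv k)
        - (∑ j, (∑ k, (∑ l, C k j l * yv l) * gfh k) * yv j)
        - (∑ j, (∑ l, C l h j * yl l) * yv j) := by
    symm
    rw [Finset.mul_sum, ← Finset.sum_sub_distrib, ← Finset.sum_sub_distrib]
    exact Finset.sum_congr rfl fun j _ => by ring
  rw [expand, s4, ← swap]
  ring

lemma sum_shuffle {n : ℕ} (G : Fin n → ℝ) (gf : Fin n → Fin n → ℝ)
    (A : Fin n → Fin n → ℝ) (yv : Fin n → ℝ) :
    ∑ h, G h * (2 * ∑ j, (∑ k, A k j * gf k h) * yv j)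
    = 2 * ∑ j, ∑ k, A k j * yv j * (∑ h, G h * gf k h) := by
  simp only [Finset.mul_sum, Finset.sum_mul]
  rw [Finset.sum_comm]
  refine Finset.sum_congr rfl fun j _ => ?_
  rw [Finset.sum_comm]
  exact Finset.sum_congr rfl fun k _ => Finset.sum_congr rfl fun hh _ => by ring

/-- the spray coefficients of a Finsler structure `F` decompose,
relative to a Riemannian metric `g̃` on `U`, as `2G^i = 2G̃^i + 2B^i` on
`U × (ℝⁿ∖{0})`. -/
theorem spray_decomposition {n : ℕ} (hn : 1 ≤ n) (U : Set (Fin n → ℝ))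
    (F : (Fin n → ℝ) → (Fin n → ℝ) → ℝ) (hF : IsFinsler U F)
    (gt : (Fin n → ℝ) → Matrix (Fin n) (Fin n) ℝ) (hg : IsRiemann U gt) :
    ∀ x ∈ U, ∀ y : Fin n → ℝ, y ≠ 0 → ∀ i : Fin n,
      2 * spray F i x y = 2 * gTildeSpray gt i x y + 2 * bCoef F gt i x y := by
  intro x hx y hy i
  classical
  -- pd rewriting lemmas
  have pdA : ∀ h k : Fin n, pd (fun y' => yLow F h x y') k y = gF F k h x y := by
    intro h k
    simp only [yLow]
    rw [pd_const_mul]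
    rfl
  have pdB : ∀ h j : Fin n, pd (fun x' => yLow F h x' y) j x
      = (1/2) * pd (fun x' => pd (fun y' => (F x' y') ^ 2) h y) j x := by
    intro h j
    simp only [yLow]
    rw [pd_const_mul]
  have pdC : ∀ k : Fin n, pd (fun y' => (F x y') ^ 2) k y = 2 * yLow F k x y := by
    intro k
    simp only [yLow]
    ring
  -- matrix facts
  have hpdf := hF.posdef x hx y hy
  have hsym : ∀ a b : Fin n, gF F a b x y = gF F b a x y := by
    intro a b
    have h1 := hpdf.isHermitian.apply b a
    simpa [gMat] using h1
  have hdelta : ∀ k : Fin n,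
      (∑ h, gInv F i h x y * gF F k h x y) = if i = k then 1 else 0 := by
    intro k
    have hdet : IsUnit (gMat F x y).det := isUnit_iff_ne_zero.mpr (ne_of_gt hpdf.det_pos)
    have hmul := Matrix.nonsing_inv_mul (gMat F x y) hdet
    have h2 := congrFun (congrFun hmul i) k
    rw [Matrix.mul_apply] at h2
    calc (∑ h, gInv F i h x y * gF F k h x y)
        = ∑ h, (gMat F x y)⁻¹ i h * gMat F x y h k := by
          refine Finset.sum_congr rfl fun h _ => ?_
          rw [gInv]
          congr 1
          rw [hsym k h]
          rfl
      _ = if i = k then 1 else 0 := by rw [h2, Matrix.one_apply]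
  -- the key per-index identity
  have e1 : ∀ h j : Fin n, yLowCov F gt h j x y
      = (1/2) * pd (fun x' => pd (fun y' => (F x' y') ^ 2) h y) j x
        - (∑ k, (∑ l, christ gt k j l x * y l) * gF F k h x y)
        - ∑ l, christ gt l h j x * yLow F l x y := by
    intro h j
    simp only [yLowCov, rhder, pdA, pdB]
  have key : ∀ h : Fin n,
      2 * (∑ j, yLowCov F gt h j x y * y j) - rhder gt h (fun a b => (F a b) ^ 2) x y
      = ((∑ k, pd (fun x' => pd (fun y' => (F x' y') ^ 2) h y) k x * y k)
          - pd (fun x' => (F x' y) ^ 2) h x)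
        - 2 * ∑ j, (∑ k, (∑ l, christ gt k j l x * y l) * gF F k h x y) * y j := by
    intro h
    simp only [e1, rhder, pdC]
    exact key_algebra h (fun a b c => christ gt a b c x)
      (fun k => pd (fun x' => pd (fun y' => (F x' y') ^ 2) h y) k x)
      (fun k => gF F k h x y) (fun k => yLow F k x y) y
      (pd (fun x' => (F x' y) ^ 2) h x)
  -- assembly
  have assemble : (∑ h, gInv F i h x y *
        ((∑ k, pd (fun x' => pd (fun y' => (F x' y') ^ 2) h y) k x * y k)
          - pd (fun x' => (F x' y) ^ 2) h x))
      - (∑ h, gInv F i h x y *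
        (2 * (∑ j, yLowCov F gt h j x y * y j)
          - rhder gt h (fun a b => (F a b) ^ 2) x y))
      = ∑ h, gInv F i h x y *
          (2 * ∑ j, (∑ k, (∑ l, christ gt k j l x * y l) * gF F k h x y) * y j) := by
    rw [← Finset.sum_sub_distrib]
    refine Finset.sum_congr rfl fun h _ => ?_
    rw [key h]
    ring
  have shuffled : (∑ h, gInv F i h x y *
        (2 * ∑ j, (∑ k, (∑ l, christ gt k j l x * y l) * gF F k h x y) * y j))
      = 2 * ∑ j, ∑ k, (∑ l, christ gt k j l x * y l) * y j
          * (∑ h, gInv F i h x y * gF F k h x y) := by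
    exact sum_shuffle (fun h => gInv F i h x y) (fun k h => gF F k h x y)
      (fun k j => ∑ l, christ gt k j l x * y l) y
  have final : (∑ h, gInv F i h x y *
        (2 * ∑ j, (∑ k, (∑ l, christ gt k j l x * y l) * gF F k h x y) * y j))
      = 4 * gTildeSpray gt i x y := by
    rw [shuffled]
    simp only [hdelta, mul_ite, mul_one, mul_zero, Finset.sum_ite_eq, Finset.mem_univ,
      if_true]
    have inner : ∀ j : Fin n, (∑ l, christ gt i j l x * y l) * y j
        = ∑ k, christ gt i j k x * y j * y k := by
      intro j
      rw [Finset.sum_mul]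
      exact Finset.sum_congr rfl fun k _ => by ring
    simp only [inner, gTildeSpray]
    ring
  -- conclude
  rw [spray, bCoef]
  linarith [assemble, final]
end
end

section
/- Let F be a Finsler structure on U, g̃ a Riemannian metric on U, and a : U → ℝⁿ a smooth vector field. If (F²)_{||h} = ( g_{pq} a^p y^q ) · y_h on U × (ℝⁿ∖{0}) for every h, then 2 y_{h||j} y^j − (F²)_{||h} = ( g_{hq} a^q ) · F² for every h; equivalently, B^i = (1/4) a^i F² for every i. -/
noncomputable section

open scoped BigOperators

theorem pd_congr {k : ℕ} {f g : (Fin k → ℝ) → ℝ} {i : Fin k} {x : Fin k → ℝ}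
    (h : f =ᶠ[nhds x] g) : pd f i x = pd g i x := by
  unfold pd; rw [h.fderiv_eq]

theorem pd_slice_y {k : ℕ} {u : (Fin k → ℝ) × (Fin k → ℝ) → ℝ} {x y : Fin k → ℝ}
    (h : DifferentiableAt ℝ u (x, y)) (i : Fin k) :
    pd (fun y' => u (x, y')) i y = fderiv ℝ u (x, y) (0, Pi.single i 1) := by
  have h1 : HasFDerivAt (fun y' : Fin k → ℝ => u (x, y'))
      ((fderiv ℝ u (x, y)).comp (ContinuousLinearMap.inr ℝ _ _)) y :=
    h.hasFDerivAt.comp y (hasFDerivAt_prodMk_right x y)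
  rw [pd, h1.fderiv]; rfl

theorem pd_slice_x {k : ℕ} {u : (Fin k → ℝ) × (Fin k → ℝ) → ℝ} {x y : Fin k → ℝ}
    (h : DifferentiableAt ℝ u (x, y)) (i : Fin k) :
    pd (fun x' => u (x', y)) i x = fderiv ℝ u (x, y) (Pi.single i 1, 0) := by
  have h1 : HasFDerivAt (fun x' : Fin k → ℝ => u (x', y))
      ((fderiv ℝ u (x, y)).comp (ContinuousLinearMap.inl ℝ _ _)) x :=
    h.hasFDerivAt.comp x (hasFDerivAt_prodMk_left x y)
  rw [pd, h1.fderiv]; rfl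

theorem hasFDerivAt_fderiv_app {E : Type*} [NormedAddCommGroup E] [NormedSpace ℝ E]
    {u : E → ℝ} {p : E} (h : ContDiffAt ℝ (⊤ : ℕ∞) u p) (v : E) :
    HasFDerivAt (fun q => fderiv ℝ u q v) ((fderiv ℝ (fderiv ℝ u) p).flip v) p := by
  have h1 : DifferentiableAt ℝ (fderiv ℝ u) p :=
    (h.fderiv_right (m := (⊤ : ℕ∞)) (by simp)).differentiableAt (by simp)
  have h2 := h1.hasFDerivAt.clm_apply (hasFDerivAt_const v p)
  simpa using h2

theorem d2_symm {E : Type*} [NormedAddCommGroup E] [NormedSpace ℝ E]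
    {u : E → ℝ} {p : E} (h : ContDiffAt ℝ (⊤ : ℕ∞) u p) (v w : E) :
    fderiv ℝ (fderiv ℝ u) p v w = fderiv ℝ (fderiv ℝ u) p w v :=
  (h.isSymmSndFDerivAt (by rw [minSmoothness_of_isRCLikeNormedField]; exact WithTop.coe_le_coe.mpr le_top)) v w

theorem clm_expand {k : ℕ} (T : ((Fin k → ℝ) × (Fin k → ℝ)) →L[ℝ] ℝ) (y : Fin k → ℝ) :
    T (0, y) = ∑ j, y j * T (0, Pi.single j 1) := by
  have hsnd : ∑ j, y j • (Pi.single j 1 : Fin k → ℝ) = y := by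
    funext l
    simp [Finset.sum_apply, Pi.single_apply]
  have h0 : ((0 : Fin k → ℝ), y) = ∑ j, y j • (((0 : Fin k → ℝ), Pi.single j 1) :
      (Fin k → ℝ) × (Fin k → ℝ)) := by
    apply Prod.ext
    · simp [Prod.fst_sum]
    · simp [Prod.snd_sum, hsnd]
  rw [h0, map_sum]
  refine Finset.sum_congr rfl fun j _ => ?_
  rw [T.map_smul, smul_eq_mul]

/-- `F²` as a function on the product space. -/
def Fsq {n : ℕ} (F : (Fin n → ℝ) → (Fin n → ℝ) → ℝ) :
    (Fin n → ℝ) × (Fin n → ℝ) → ℝ := fun p => (F p.1 p.2) ^ 2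

section FinslerFacts

variable {n : ℕ} {U : Set (Fin n → ℝ)} {F : (Fin n → ℝ) → (Fin n → ℝ) → ℝ}
  {x y : Fin n → ℝ}

theorem Fsq_contDiffAt (hF : IsFinsler U F) (hx : x ∈ U) (hy : y ≠ 0) :
    ContDiffAt ℝ (⊤ : ℕ∞) (Fsq F) (x, y) := by
  have h1 : ContDiffOn ℝ (⊤ : ℕ∞) (Fsq F) (U ×ˢ {y : Fin n → ℝ | y ≠ 0}) := hF.smooth.pow 2
  exact h1.contDiffAt ((hF.isOpen.prod isOpen_ne).mem_nhds (Set.mk_mem_prod hx hy))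

theorem yLow_eq (hF : IsFinsler U F) (hx : x ∈ U) (hy : y ≠ 0) (h : Fin n) :
    yLow F h x y = (1 / 2) * fderiv ℝ (Fsq F) (x, y) (0, Pi.single h 1) := by
  unfold yLow
  rw [show (fun y' => (F x y') ^ 2) = (fun y' => Fsq F (x, y')) from rfl,
    pd_slice_y ((Fsq_contDiffAt hF hx hy).differentiableAt (by simp)) h]

theorem pdx_Fsq (hF : IsFinsler U F) (hx : x ∈ U) (hy : y ≠ 0) (j : Fin n) :
    pd (fun x' => (F x' y) ^ 2) j x = fderiv ℝ (Fsq F) (x, y) (Pi.single j 1, 0) := by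
  rw [show (fun x' => (F x' y) ^ 2) = (fun x' => Fsq F (x', y)) from rfl,
    pd_slice_x ((Fsq_contDiffAt hF hx hy).differentiableAt (by simp)) j]

theorem pdy_Fsq (hF : IsFinsler U F) (hx : x ∈ U) (hy : y ≠ 0) (k : Fin n) :
    pd (fun y' => (F x y') ^ 2) k y = fderiv ℝ (Fsq F) (x, y) (0, Pi.single k 1) := by
  rw [show (fun y' => (F x y') ^ 2) = (fun y' => Fsq F (x, y')) from rfl,
    pd_slice_y ((Fsq_contDiffAt hF hx hy).differentiableAt (by simp)) k]

theorem gF_eq (hF : IsFinsler U F) (hx : x ∈ U) (hy : y ≠ 0) (i j : Fin n) :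
    gF F i j x y = (1 / 2) *
      fderiv ℝ (fderiv ℝ (Fsq F)) (x, y) (0, Pi.single i 1) (0, Pi.single j 1) := by
  unfold gF
  have hev : (fun y' => pd (fun y'' => (F x y'') ^ 2) j y') =ᶠ[nhds y]
      (fun y' => fderiv ℝ (Fsq F) (x, y') (0, Pi.single j 1)) := by
    filter_upwards [isOpen_ne.eventually_mem hy] with y' hy'
    exact pdy_Fsq hF hx hy' j
  rw [pd_congr hev, pd]
  have hD : HasFDerivAt (fun y' => fderiv ℝ (Fsq F) (x, y') (0, Pi.single j 1))
      (((fderiv ℝ (fderiv ℝ (Fsq F)) (x, y)).flip (0, Pi.single j 1)).comp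
        (ContinuousLinearMap.inr ℝ _ _)) y :=
    (hasFDerivAt_fderiv_app (Fsq_contDiffAt hF hx hy) _).comp y
      (hasFDerivAt_prodMk_right x y)
  rw [hD.fderiv]; rfl

theorem pdx_yLow (hF : IsFinsler U F) (hx : x ∈ U) (hy : y ≠ 0) (h j : Fin n) :
    pd (fun x' => yLow F h x' y) j x = (1 / 2) *
      fderiv ℝ (fderiv ℝ (Fsq F)) (x, y) (Pi.single j 1, 0) (0, Pi.single h 1) := by
  have hev : (fun x' => yLow F h x' y) =ᶠ[nhds x]
      (fun x' => (1 / 2) * fderiv ℝ (Fsq F) (x', y) (0, Pi.single h 1)) := by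
    filter_upwards [hF.isOpen.eventually_mem hx] with x' hx'
    exact yLow_eq hF hx' hy h
  rw [pd_congr hev, pd]
  have hD : HasFDerivAt
      (fun x' : Fin n → ℝ => (1 / 2 : ℝ) * fderiv ℝ (Fsq F) (x', y) (0, Pi.single h 1))
      ((1 / 2 : ℝ) • (((fderiv ℝ (fderiv ℝ (Fsq F)) (x, y)).flip (0, Pi.single h 1)).comp
        (ContinuousLinearMap.inl ℝ (Fin n → ℝ) (Fin n → ℝ)))) x :=
    by
      have h0 := (hasFDerivAt_fderiv_app (Fsq_contDiffAt hF hx hy) (0, Pi.single h 1)).comp x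
        (hasFDerivAt_prodMk_left (𝕜 := ℝ) x y)
      exact h0.const_mul (1 / 2 : ℝ)
  rw [hD.fderiv]
  simp [ContinuousLinearMap.smul_apply, ContinuousLinearMap.comp_apply,
    ContinuousLinearMap.inl_apply, ContinuousLinearMap.flip_apply, smul_eq_mul]

theorem pdy_yLow (hF : IsFinsler U F) (hx : x ∈ U) (hy : y ≠ 0) (h k : Fin n) :
    pd (fun y' => yLow F h x y') k y = (1 / 2) *
      fderiv ℝ (fderiv ℝ (Fsq F)) (x, y) (0, Pi.single k 1) (0, Pi.single h 1) := by
  have hev : (fun y' => yLow F h x y') =ᶠ[nhds y]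
      (fun y' => (1 / 2) * fderiv ℝ (Fsq F) (x, y') (0, Pi.single h 1)) := by
    filter_upwards [isOpen_ne.eventually_mem hy] with y' hy'
    exact yLow_eq hF hx hy' h
  rw [pd_congr hev, pd]
  have hD : HasFDerivAt
      (fun y' : Fin n → ℝ => (1 / 2 : ℝ) * fderiv ℝ (Fsq F) (x, y') (0, Pi.single h 1))
      ((1 / 2 : ℝ) • (((fderiv ℝ (fderiv ℝ (Fsq F)) (x, y)).flip (0, Pi.single h 1)).comp
        (ContinuousLinearMap.inr ℝ (Fin n → ℝ) (Fin n → ℝ)))) y :=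
    (((hasFDerivAt_fderiv_app (Fsq_contDiffAt hF hx hy) (0, Pi.single h 1)).comp y
      (hasFDerivAt_prodMk_right x y))).const_mul (1 / 2 : ℝ)
  rw [hD.fderiv]
  simp [ContinuousLinearMap.smul_apply, ContinuousLinearMap.comp_apply,
    ContinuousLinearMap.inr_apply, ContinuousLinearMap.flip_apply, smul_eq_mul]

theorem euler1 (hF : IsFinsler U F) (hx : x ∈ U) (hy : y ≠ 0) :
    fderiv ℝ (Fsq F) (x, y) (0, y) = 2 * Fsq F (x, y) := by
  have hγ : HasDerivAt (fun t : ℝ => ((x, t • y) : (Fin n → ℝ) × (Fin n → ℝ)))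
      ((0, y) : (Fin n → ℝ) × (Fin n → ℝ)) 1 := by
    have h2 : HasDerivAt (fun t : ℝ => t • y) ((1 : ℝ) • y) 1 :=
      (hasDerivAt_id 1).smul_const y
    rw [one_smul] at h2
    exact HasDerivAt.prodMk (hasDerivAt_const (1 : ℝ) x) h2
  have hf : HasFDerivAt (Fsq F) (fderiv ℝ (Fsq F) (x, y)) (x, y) :=
    ((Fsq_contDiffAt hF hx hy).differentiableAt (by simp)).hasFDerivAt
  have hc1 : HasDerivAt (fun t : ℝ => Fsq F (x, t • y))
      (fderiv ℝ (Fsq F) (x, y) (0, y)) 1 := by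
    have := HasFDerivAt.comp_hasDerivAt 1 (by rw [one_smul]; exact hf) hγ
    exact this
  have hc2 : HasDerivAt (fun t : ℝ => t ^ 2 * Fsq F (x, y)) (2 * Fsq F (x, y)) 1 := by
    have := (hasDerivAt_pow 2 (1 : ℝ)).mul_const (Fsq F (x, y))
    simpa using this
  have hev : (fun t : ℝ => Fsq F (x, t • y)) =ᶠ[nhds 1]
      (fun t : ℝ => t ^ 2 * Fsq F (x, y)) := by
    filter_upwards [eventually_gt_nhds (by norm_num : (0 : ℝ) < 1)] with t ht
    simp only [Fsq, hF.homog x hx y t ht]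
    ring
  exact hc1.unique (hc2.congr_of_eventuallyEq hev)

theorem euler2 (hF : IsFinsler U F) (hx : x ∈ U) (hy : y ≠ 0) (h : Fin n) :
    fderiv ℝ (fderiv ℝ (Fsq F)) (x, y) (0, Pi.single h 1) (0, y)
      = fderiv ℝ (Fsq F) (x, y) (0, Pi.single h 1) := by
  have hdf : DifferentiableAt ℝ (fderiv ℝ (Fsq F)) (x, y) :=
    (((Fsq_contDiffAt hF hx hy).fderiv_right (m := (⊤ : ℕ∞)) (by simp))).differentiableAt (by simp)
  have hc : HasFDerivAt (fun y' : Fin n → ℝ => fderiv ℝ (Fsq F) (x, y'))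
      ((fderiv ℝ (fderiv ℝ (Fsq F)) (x, y)).comp (ContinuousLinearMap.inr ℝ _ _)) y :=
    hdf.hasFDerivAt.comp y (hasFDerivAt_prodMk_right x y)
  have hu : HasFDerivAt (fun y' : Fin n → ℝ => (((0 : Fin n → ℝ), y') :
      (Fin n → ℝ) × (Fin n → ℝ))) (ContinuousLinearMap.inr ℝ _ _) y :=
    hasFDerivAt_prodMk_right 0 y
  have hL := hc.clm_apply hu
  have hR : HasFDerivAt (fun y' : Fin n → ℝ => 2 * Fsq F (x, y'))
      ((2 : ℝ) • ((fderiv ℝ (Fsq F) (x, y)).comp (ContinuousLinearMap.inr ℝ _ _))) y := by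
    have h1 : HasFDerivAt (fun y' : Fin n → ℝ => Fsq F (x, y'))
        ((fderiv ℝ (Fsq F) (x, y)).comp (ContinuousLinearMap.inr ℝ _ _)) y :=
      ((Fsq_contDiffAt hF hx hy).differentiableAt (by simp)).hasFDerivAt.comp y
        (hasFDerivAt_prodMk_right x y)
    simpa [smul_eq_mul] using h1.const_mul (2 : ℝ)
  have hev : (fun y' : Fin n → ℝ => fderiv ℝ (Fsq F) (x, y') (0, y')) =ᶠ[nhds y]
      (fun y' : Fin n → ℝ => 2 * Fsq F (x, y')) := by
    filter_upwards [isOpen_ne.eventually_mem hy] with y' hy'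
    exact euler1 hF hx hy'
  have heq := hL.unique (hR.congr_of_eventuallyEq hev)
  have := congrArg (fun T : (Fin n → ℝ) →L[ℝ] ℝ => T (Pi.single h 1)) heq
  simp only [ContinuousLinearMap.add_apply, ContinuousLinearMap.comp_apply,
    ContinuousLinearMap.inr_apply, ContinuousLinearMap.flip_apply,
    ContinuousLinearMap.smul_apply, smul_eq_mul] at this
  linarith [this]

end FinslerFacts

theorem christ_symm {m : ℕ} {Ut : Set (Fin m → ℝ)}
    {gt : (Fin m → ℝ) → Matrix (Fin m) (Fin m) ℝ}
    (hg : IsRiemann Ut gt) {x : Fin m → ℝ} (hx : x ∈ Ut) (i j k : Fin m) :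
    christ gt i j k x = christ gt i k j x := by
  have hpd : ∀ a b c : Fin m, pd (fun x' => gt x' a b) c x
      = pd (fun x' => gt x' b a) c x := by
    intro a b c
    apply pd_congr
    filter_upwards [hg.isOpen.eventually_mem hx] with x' hx'
    exact (hg.symm x' hx').apply b a
  unfold christ
  congr 1
  refine Finset.sum_congr rfl fun h _ => ?_
  rw [hpd j k h]
  ring

/-- if `(F²)_{||h} = ( g_{pq} a^p y^q ) · y_h`, then
`2 y_{h||j} y^j − (F²)_{||h} = ( g_{hq} a^q ) · F²`; equivalently
`B^i = (1/4) a^i F²`. -/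
theorem bCoef_of_special_perturbation {n : ℕ} (hn : 1 ≤ n)
    (U : Set (Fin n → ℝ)) (F : (Fin n → ℝ) → (Fin n → ℝ) → ℝ) (hF : IsFinsler U F)
    (gt : (Fin n → ℝ) → Matrix (Fin n) (Fin n) ℝ) (hg : IsRiemann U gt)
    (a : (Fin n → ℝ) → Fin n → ℝ) (ha : ∀ i, ContDiffOn ℝ (⊤ : ℕ∞) (fun x => a x i) U)
    (hFa : ∀ x ∈ U, ∀ y : Fin n → ℝ, y ≠ 0 → ∀ h : Fin n,
      rhder gt h (fun u v => (F u v) ^ 2) x y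
        = (∑ p, ∑ q, gF F p q x y * a x p * y q) * yLow F h x y) :
    ∀ x ∈ U, ∀ y : Fin n → ℝ, y ≠ 0 →
      (∀ h : Fin n,
        2 * (∑ j, yLowCov F gt h j x y * y j)
            - rhder gt h (fun u v => (F u v) ^ 2) x y
          = (∑ q, gF F h q x y * a x q) * (F x y) ^ 2) ∧
      (∀ i : Fin n, bCoef F gt i x y = (1 / 4) * a x i * (F x y) ^ 2) := by
  intro x hx y hy
  have hcd := Fsq_contDiffAt hF hx hy
  set D1c : ((Fin n → ℝ) × (Fin n → ℝ)) →L[ℝ] ℝ := fderiv ℝ (Fsq F) (x, y) with hD1c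
  set D2c := fderiv ℝ (fderiv ℝ (Fsq F)) (x, y) with hD2c
  set A : Fin n → ℝ := fun k => D1c (0, Pi.single k 1) with hAdef
  set C : Fin n → Fin n → ℝ := fun k l => D2c (0, Pi.single k 1) (0, Pi.single l 1) with hCdef
  set Mx : Fin n → Fin n → ℝ := fun j h => D2c (Pi.single j 1, 0) (0, Pi.single h 1) with hMdef
  have hES1 : ∑ j, y j * A j = 2 * (F x y) ^ 2 := by
    calc ∑ j, y j * A j = D1c (0, y) := (clm_expand D1c y).symm
      _ = 2 * (F x y) ^ 2 := euler1 hF hx hy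
  have hES2 : ∀ h, ∑ j, y j * C h j = A h := by
    intro h
    calc ∑ j, y j * C h j = D2c (0, Pi.single h 1) (0, y) :=
          (clm_expand (D2c (0, Pi.single h 1)) y).symm
      _ = A h := euler2 hF hx hy h
  have hCsym : ∀ k l, C k l = C l k := fun k l =>
    d2_symm hcd (0, Pi.single k 1) (0, Pi.single l 1)
  have hMsym : ∀ j h, D2c (0, Pi.single h 1) (Pi.single j 1, 0) = Mx j h := fun j h =>
    d2_symm hcd (0, Pi.single h 1) (Pi.single j 1, 0)
  have hF1 : ∀ l, yLow F l x y = (1 / 2) * A l := fun l => yLow_eq hF hx hy l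
  have hF2 : ∀ i j, gF F i j x y = (1 / 2) * C i j := fun i j => gF_eq hF hx hy i j
  have hphi : ∀ y' : Fin n → ℝ, y' ≠ 0 →
      (∑ p, ∑ q, gF F p q x y' * a x p * y' q) = ∑ p, a x p * yLow F p x y' := by
    intro y' hy'
    refine Finset.sum_congr rfl fun p _ => ?_
    have h1 : ∑ q, gF F p q x y' * a x p * y' q = a x p * ∑ q, y' q * gF F p q x y' := by
      rw [Finset.mul_sum]; exact Finset.sum_congr rfl fun q _ => by ring
    rw [h1]
    congr 1
    calc ∑ q, y' q * gF F p q x y'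
        = (1 / 2) * ∑ q, y' q *
            fderiv ℝ (fderiv ℝ (Fsq F)) (x, y') (0, Pi.single p 1) (0, Pi.single q 1) := by
          rw [Finset.mul_sum]
          exact Finset.sum_congr rfl fun q _ => by rw [gF_eq hF hx hy' p q]; ring
      _ = (1 / 2) * (fderiv ℝ (fderiv ℝ (Fsq F)) (x, y') (0, Pi.single p 1) (0, y')) := by
          rw [← clm_expand]
      _ = (1 / 2) * fderiv ℝ (Fsq F) (x, y') (0, Pi.single p 1) := by
          rw [euler2 hF hx hy' p]
      _ = yLow F p x y' := (yLow_eq hF hx hy' p).symm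
  have hrh : ∀ y' : Fin n → ℝ, y' ≠ 0 → ∀ j, rhder gt j (fun u v => (F u v) ^ 2) x y'
      = (∑ p, a x p * ((1 / 2) * fderiv ℝ (Fsq F) (x, y') (0, Pi.single p 1)))
        * ((1 / 2) * fderiv ℝ (Fsq F) (x, y') (0, Pi.single j 1)) := by
    intro y' hy' j
    rw [hFa x hx y' hy' j, hphi y' hy', yLow_eq hF hx hy' j]
    congr 1
    exact Finset.sum_congr rfl fun p _ => by rw [yLow_eq hF hx hy' p]
  have G : ∀ v : (Fin n → ℝ) × (Fin n → ℝ),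
      HasFDerivAt (fun y' : Fin n → ℝ => fderiv ℝ (Fsq F) (x, y') v)
        ((D2c.flip v).comp (ContinuousLinearMap.inr ℝ (Fin n → ℝ) (Fin n → ℝ))) y := fun v =>
    (hasFDerivAt_fderiv_app hcd v).comp y (hasFDerivAt_prodMk_right x y)
  have hkeyd : ∀ j h : Fin n,
      Mx j h = (∑ k, ((∑ l, christ gt k j l x * y l) * C h k + A k * christ gt k j h x))
        + (∑ p, a x p * ((1 / 2) * A p)) * ((1 / 2) * C h j)
        + ((1 / 2) * A j) * (∑ p, a x p * ((1 / 2) * C h p)) := by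
    intro j h
    have hlin : ∀ k, HasFDerivAt (fun y' : Fin n → ℝ => ∑ l, christ gt k j l x * y' l)
        (∑ l, christ gt k j l x • ContinuousLinearMap.proj (R := ℝ)
          (φ := fun _ : Fin n => ℝ) l) y := fun k =>
      HasFDerivAt.fun_sum fun l _ => (hasFDerivAt_apply l y).const_mul _
    have hL : HasFDerivAt (fun y' : Fin n → ℝ =>
        fderiv ℝ (Fsq F) (x, y') (Pi.single j 1, 0)
          - ∑ k, (∑ l, christ gt k j l x * y' l) * fderiv ℝ (Fsq F) (x, y') (0, Pi.single k 1))
        (((D2c.flip (Pi.single j 1, 0)).comp (ContinuousLinearMap.inr ℝ (Fin n → ℝ) (Fin n → ℝ)))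
          - ∑ k, ((∑ l, christ gt k j l x * y l) •
              ((D2c.flip (0, Pi.single k 1)).comp
                (ContinuousLinearMap.inr ℝ (Fin n → ℝ) (Fin n → ℝ)))
            + (A k) • (∑ l, christ gt k j l x • ContinuousLinearMap.proj (R := ℝ)
                (φ := fun _ : Fin n => ℝ) l))) y :=
      (G (Pi.single j 1, 0)).sub (HasFDerivAt.fun_sum fun k _ => (hlin k).mul (G (0, Pi.single k 1)))
    have hR : HasFDerivAt (fun y' : Fin n → ℝ =>
        (∑ p, a x p * ((1 / 2) * fderiv ℝ (Fsq F) (x, y') (0, Pi.single p 1)))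
          * ((1 / 2) * fderiv ℝ (Fsq F) (x, y') (0, Pi.single j 1)))
        ((∑ p, a x p * ((1 / 2) * A p)) • ((1 / 2 : ℝ) •
            ((D2c.flip (0, Pi.single j 1)).comp
              (ContinuousLinearMap.inr ℝ (Fin n → ℝ) (Fin n → ℝ))))
          + ((1 / 2) * A j) • (∑ p, (a x p) • ((1 / 2 : ℝ) •
            ((D2c.flip (0, Pi.single p 1)).comp
              (ContinuousLinearMap.inr ℝ (Fin n → ℝ) (Fin n → ℝ)))))) y :=
      (HasFDerivAt.fun_sum fun p _ =>
        ((G (0, Pi.single p 1)).const_mul (1 / 2 : ℝ)).const_mul (a x p)).mul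
        ((G (0, Pi.single j 1)).const_mul (1 / 2 : ℝ))
    have hev : (fun y' : Fin n → ℝ =>
        fderiv ℝ (Fsq F) (x, y') (Pi.single j 1, 0)
          - ∑ k, (∑ l, christ gt k j l x * y' l) * fderiv ℝ (Fsq F) (x, y') (0, Pi.single k 1))
        =ᶠ[nhds y] (fun y' : Fin n → ℝ =>
        (∑ p, a x p * ((1 / 2) * fderiv ℝ (Fsq F) (x, y') (0, Pi.single p 1)))
          * ((1 / 2) * fderiv ℝ (Fsq F) (x, y') (0, Pi.single j 1))) := by
      filter_upwards [isOpen_ne.eventually_mem hy] with y' hy'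
      have h1 : rhder gt j (fun u v => (F u v) ^ 2) x y'
          = fderiv ℝ (Fsq F) (x, y') (Pi.single j 1, 0)
            - ∑ k, (∑ l, christ gt k j l x * y' l) *
                fderiv ℝ (Fsq F) (x, y') (0, Pi.single k 1) := by
        simp only [rhder]
        rw [pdx_Fsq hF hx hy' j]
        congr 1
        exact Finset.sum_congr rfl fun k _ => by rw [pdy_Fsq hF hx hy' k]
      rw [← h1, hrh y' hy' j]
    have heq := hL.unique (hR.congr_of_eventuallyEq hev)
    have happ := congrArg (fun T : (Fin n → ℝ) →L[ℝ] ℝ => T (Pi.single h 1)) heq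
    simp only [ContinuousLinearMap.sub_apply, ContinuousLinearMap.add_apply,
      ContinuousLinearMap.coe_sum', Finset.sum_apply, ContinuousLinearMap.smul_apply,
      ContinuousLinearMap.comp_apply, ContinuousLinearMap.inr_apply,
      ContinuousLinearMap.flip_apply, ContinuousLinearMap.proj_apply,
      smul_eq_mul, Pi.single_apply, mul_ite, mul_one, mul_zero,
      Finset.sum_ite_eq', Finset.mem_univ, if_true] at happ
    rw [← hMsym j h] at *
    linarith [happ]
  set ψ : ℝ := ∑ p, a x p * ((1 / 2) * A p) with hpsi
  have hcov2 : ∀ h j : Fin n, yLowCov F gt h j x y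
      = (1 / 2) * (ψ * ((1 / 2) * C h j) + ((1 / 2) * A j) * (∑ p, a x p * ((1 / 2) * C h p))) := by
    intro h j
    have h1 : yLowCov F gt h j x y
        = (1 / 2) * Mx j h
          - ∑ k, (∑ l, christ gt k j l x * y l) * ((1 / 2) * C k h)
          - ∑ l, christ gt l h j x * ((1 / 2) * A l) := by
      simp only [yLowCov, rhder]
      rw [pdx_yLow hF hx hy h j]
      have e1 : ∀ k : Fin n, pd (fun y' => yLow F h x y') k y = (1 / 2) * C k h :=
        fun k => pdy_yLow hF hx hy h k
      have e2 : ∑ k, (∑ l, christ gt k j l x * y l) * pd (fun y' => yLow F h x y') k y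
          = ∑ k, (∑ l, christ gt k j l x * y l) * ((1 / 2) * C k h) :=
        Finset.sum_congr rfl fun k _ => by rw [e1 k]
      have e3 : ∑ l, christ gt l h j x * yLow F l x y
          = ∑ l, christ gt l h j x * ((1 / 2) * A l) :=
        Finset.sum_congr rfl fun l _ => by rw [hF1 l]
      rw [e2, e3]
    have e4 : ∑ k, (∑ l, christ gt k j l x * y l) * ((1 / 2) * C k h)
        = ∑ k, (∑ l, christ gt k j l x * y l) * ((1 / 2) * C h k) :=
      Finset.sum_congr rfl fun k _ => by rw [hCsym k h]
    have e5 : ∑ l, christ gt l h j x * ((1 / 2) * A l)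
        = ∑ k, christ gt k j h x * ((1 / 2) * A k) :=
      Finset.sum_congr rfl fun k _ => by rw [christ_symm hg hx k h j]
    have e6 : (1 / 2 : ℝ) * (∑ k, ((∑ l, christ gt k j l x * y l) * C h k
          + A k * christ gt k j h x))
        = (∑ k, (∑ l, christ gt k j l x * y l) * ((1 / 2) * C h k))
          + ∑ k, christ gt k j h x * ((1 / 2) * A k) := by
      rw [Finset.mul_sum, ← Finset.sum_add_distrib]
      exact Finset.sum_congr rfl fun k _ => by ring
    rw [h1, hkeyd j h, e4, e5]
    linear_combination e6
  have hpart1 : ∀ h : Fin n,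
      2 * (∑ j, yLowCov F gt h j x y * y j)
          - rhder gt h (fun u v => (F u v) ^ 2) x y
        = (∑ q, gF F h q x y * a x q) * (F x y) ^ 2 := by
    intro h
    have hsum : ∑ j, yLowCov F gt h j x y * y j
        = (1 / 4) * ψ * (∑ j, y j * C h j)
          + (1 / 4) * (∑ p, a x p * ((1 / 2) * C h p)) * (∑ j, y j * A j) := by
      have hterm : ∀ j : Fin n, yLowCov F gt h j x y * y j
          = ((1 / 4) * ψ) * (y j * C h j)
            + ((1 / 4) * (∑ p, a x p * ((1 / 2) * C h p))) * (y j * A j) := fun j => by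
        rw [hcov2 h j]; ring
      rw [Finset.sum_congr rfl fun j _ => hterm j, Finset.sum_add_distrib,
        ← Finset.mul_sum, ← Finset.mul_sum]
    have hrh0 : rhder gt h (fun u v => (F u v) ^ 2) x y = ψ * ((1 / 2) * A h) :=
      hrh y hy h
    have hgq : ∑ q, gF F h q x y * a x q = ∑ p, a x p * ((1 / 2) * C h p) :=
      Finset.sum_congr rfl fun q _ => by rw [hF2 h q]; ring
    rw [hsum, hES2 h, hES1, hrh0, hgq]
    ring
  refine ⟨hpart1, ?_⟩
  intro i
  have hdet : IsUnit (gMat F x y).det := (hF.posdef x hx y hy).det_pos.ne'.isUnit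
  have hinv : ∀ q, ∑ h, gInv F i h x y * gF F h q x y = if i = q then 1 else 0 := by
    intro q
    have h1 := Matrix.nonsing_inv_mul (gMat F x y) hdet
    have h2 := congrFun (congrFun h1 i) q
    rw [Matrix.mul_apply] at h2
    rw [Matrix.one_apply] at h2
    exact h2
  simp only [bCoef]
  have h3 : ∀ h : Fin n, 2 * (∑ j, yLowCov F gt h j x y * y j)
      - rhder gt h (fun u v => (F u v) ^ 2) x y
      = (∑ q, gF F h q x y * a x q) * (F x y) ^ 2 := hpart1
  have h4 : ∑ h, gInv F i h x y *
      (2 * (∑ j, yLowCov F gt h j x y * y j)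
        - rhder gt h (fun u v => (F u v) ^ 2) x y)
      = a x i * (F x y) ^ 2 := by
    calc ∑ h, gInv F i h x y *
        (2 * (∑ j, yLowCov F gt h j x y * y j)
          - rhder gt h (fun u v => (F u v) ^ 2) x y)
        = ∑ h, ∑ q, gInv F i h x y * gF F h q x y * (a x q * (F x y) ^ 2) := by
          refine Finset.sum_congr rfl fun h _ => ?_
          rw [h3 h, Finset.sum_mul, Finset.mul_sum]
          exact Finset.sum_congr rfl fun q _ => by ring
      _ = ∑ q, (∑ h, gInv F i h x y * gF F h q x y) * (a x q * (F x y) ^ 2) := by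
          rw [Finset.sum_comm]
          exact Finset.sum_congr rfl fun q _ => (Finset.sum_mul _ _ _).symm
      _ = ∑ q, (if i = q then 1 else 0) * (a x q * (F x y) ^ 2) :=
          Finset.sum_congr rfl fun q _ => by rw [hinv q]
      _ = a x i * (F x y) ^ 2 := by simp
  rw [h4]
  ring
end
end
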